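/- Let B1, B2 : ℝ³ → ℝ² be B1(x1,x2,x3) = (x1,x2) and B2(x1,x2,x3) = (x2,x3). If V ≤ ℝ³ is a subspace with B1(V) ≤ span{w} and B2(V) ≤ span{w} for some w = (w1,w2) ∈ ℝ², then V ≤ span{(w1², w1·w2, w2²)}; in particular dim(V) ≤ 1. -/

import Mathlib

/-! If `B1 v = a • w` and `B2 v = b • w`, then `v = (a w₀, a w₁, b w₁)` and the shared middle
coordinate gives `a w₁ = b w₀`, i.e. `(a, b)` is proportional to `w` (or `w = 0`). Hence `v`
is a multiple of `(w₀², w₀ w₁, w₁²)`. -/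

/-- The linear map `B1 : ℝ³ → ℝ²`, `(x₁,x₂,x₃) ↦ (x₁,x₂)`. -/
noncomputable def B1 : (Fin 3 → ℝ) →ₗ[ℝ] (Fin 2 → ℝ) :=
  LinearMap.pi fun j => LinearMap.proj (j.castSucc)

/-- The linear map `B2 : ℝ³ → ℝ²`, `(x₁,x₂,x₃) ↦ (x₂,x₃)`. -/
noncomputable def B2 : (Fin 3 → ℝ) →ₗ[ℝ] (Fin 2 → ℝ) :=
  LinearMap.pi fun j => LinearMap.proj (j.succ)

theorem B1_apply (x : Fin 3 → ℝ) : B1 x = ![x 0, x 1] := by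
  ext i; fin_cases i <;> rfl

theorem B2_apply (x : Fin 3 → ℝ) : B2 x = ![x 1, x 2] := by
  ext i; fin_cases i <;> rfl

theorem mem_span_veronese_of_mul_eq_mul {K : Type*} [Field K] {a b : K} {w : Fin 2 → K}
    (h : a * w 1 = b * w 0) :
    ![a * w 0, a * w 1, b * w 1] ∈ K ∙ ![w 0 ^ 2, w 0 * w 1, w 1 ^ 2] := by
  rw [Submodule.mem_span_singleton]
  rcases eq_or_ne (w 0) 0 with h0 | h0
  · rcases eq_or_ne (w 1) 0 with h1 | h1
    · exact ⟨0, by ext i; fin_cases i <;> simp [h0, h1]⟩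
    · have ha : a = 0 := by simpa [h0, h1] using h
      refine ⟨b / w 1, ?_⟩
      ext i; fin_cases i <;> simp [h0, ha]
      field_simp
  · refine ⟨a / w 0, ?_⟩
    ext i; fin_cases i <;> simp <;> field_simp
    linear_combination w 1 * h

theorem subspace_le_span_of_images_le_line (V : Submodule ℝ (Fin 3 → ℝ)) (w : Fin 2 → ℝ)
    (h1 : V.map B1 ≤ Submodule.span ℝ {w}) (h2 : V.map B2 ≤ Submodule.span ℝ {w}) :
    V ≤ Submodule.span ℝ {![w 0 ^ 2, w 0 * w 1, w 1 ^ 2]} ∧ Module.finrank ℝ V ≤ 1 := by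
  have hle : V ≤ Submodule.span ℝ {![w 0 ^ 2, w 0 * w 1, w 1 ^ 2]} := by
    intro v hv
    obtain ⟨a, ha⟩ := Submodule.mem_span_singleton.1 (h1 ⟨v, hv, rfl⟩)
    obtain ⟨b, hb⟩ := Submodule.mem_span_singleton.1 (h2 ⟨v, hv, rfl⟩)
    rw [B1_apply] at ha
    rw [B2_apply] at hb
    have hv_eq : v = ![a * w 0, a * w 1, b * w 1] := by
      ext i; fin_cases i
      · exact (congrFun ha 0).symm
      · exact (congrFun ha 1).symm
      · exact (congrFun hb 1).symm
    rw [hv_eq]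
    exact mem_span_veronese_of_mul_eq_mul ((congrFun ha 1).trans (congrFun hb 0).symm)
  refine ⟨hle, (Submodule.finrank_mono hle).trans ?_⟩
  simpa using finrank_span_le_card (R := ℝ) {![w 0 ^ 2, w 0 * w 1, w 1 ^ 2]}
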